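/- For every even natural number n = 2m, P_n has no purely imaginary roots: for every real x, P_n(x·i) ≠ 0. -/

import Mathlib

/-!
Reindex `P_{2m}(z) = ∑_{j ≤ 2m} C(2m, ⌊j/2⌋) z^j` and pair the terms `j = 2t, 2t + 1`:
`P_{2m}(z) = (1 + z) S(z²) + C(2m, m) z^{2m}` with `S(w) = ∑_{t < m} C(2m, t) w^t`.
For `z = x i` with `x ≠ 0` both `S(z²) = S(-x²)` and `C(2m, m) (-x²)^m` are real, so the
imaginary part `x S(-x²)` forces `S(-x²) = 0`, and then the real part `C(2m, m) (-x²)^m ≠ 0`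
remains. At `x = 0` the polynomial takes the value `1`.
-/

def B (n k : ℕ) : ℕ := Nat.choose n ((n - k) / 2)

noncomputable def Pc (n : ℕ) (z : ℂ) : ℂ :=
  ∑ k ∈ Finset.range (n + 1), (B n k : ℂ) * z ^ (n - k)

theorem Finset.sum_range_two_mul {M : Type*} [AddCommMonoid M] (f : ℕ → M) (m : ℕ) :
    ∑ j ∈ range (2 * m), f j = ∑ t ∈ range m, (f (2 * t) + f (2 * t + 1)) := by
  induction m with
  | zero => simp
  | succ m ih =>
    rw [show 2 * (m + 1) = 2 * m + 1 + 1 by ring, sum_range_succ, sum_range_succ, ih,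
      sum_range_succ, add_assoc]

theorem Pc_eq_sum_choose_div_two (n : ℕ) (z : ℂ) :
    Pc n z = ∑ j ∈ Finset.range (n + 1), (n.choose (j / 2) : ℂ) * z ^ j := by
  rw [Pc, ← Finset.sum_range_reflect]
  refine Finset.sum_congr rfl fun k hk => ?_
  rw [Finset.mem_range] at hk
  rw [B, show n - (n + 1 - 1 - k) = k by omega]

theorem Pc_zero (n : ℕ) : Pc n 0 = 1 := by
  rw [Pc_eq_sum_choose_div_two, Finset.sum_range_succ']
  simp

theorem Pc_two_mul (m : ℕ) (z : ℂ) :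
    Pc (2 * m) z = (1 + z) * ∑ t ∈ Finset.range m, ((2 * m).choose t : ℂ) * (z ^ 2) ^ t
      + ((2 * m).choose m : ℂ) * (z ^ 2) ^ m := by
  rw [Pc_eq_sum_choose_div_two, Finset.sum_range_succ, Finset.sum_range_two_mul,
    Finset.mul_sum, Nat.mul_div_cancel_left m two_pos, ← pow_mul]
  congr 1
  refine Finset.sum_congr rfl fun t _ => ?_
  rw [Nat.mul_div_cancel_left t two_pos, show (2 * t + 1) / 2 = t by omega, pow_succ, ← pow_mul]
  ring

theorem pascalian_even_no_imaginary_root (n : ℕ) (hn : Even n) (x : ℝ) :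
    Pc n (x * Complex.I) ≠ 0 := by
  rcases eq_or_ne x 0 with rfl | hx
  · simp [Pc_zero]
  obtain ⟨m, rfl⟩ := hn
  rw [← two_mul]
  have hsq : ((x : ℂ) * Complex.I) ^ 2 = ((-x ^ 2 : ℝ) : ℂ) := by
    push_cast
    rw [mul_pow, Complex.I_sq, mul_neg_one]
  set S : ℝ := ∑ t ∈ Finset.range m, ((2 * m).choose t : ℝ) * (-x ^ 2) ^ t
  set T : ℝ := ((2 * m).choose m : ℝ) * (-x ^ 2) ^ m
  have hT : T ≠ 0 := mul_ne_zero (by exact_mod_cast (Nat.choose_pos (by omega)).ne')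
    (pow_ne_zero _ (neg_ne_zero.mpr (pow_ne_zero 2 hx)))
  have hP : Pc (2 * m) (x * Complex.I) = (1 + x * Complex.I) * S + T := by
    rw [Pc_two_mul, hsq]
    push_cast [S, T]
    ring
  intro h0
  rw [hP] at h0
  have hS : S = 0 := by
    simpa [hx] using congrArg Complex.im h0
  apply hT
  simpa [hS] using congrArg Complex.re h0
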